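/- Let n ≥ 2 be an integer and let a' > 0 be a real number. For every x ∈ ℝ, setting I_n(x) = ∫_{b_n}^{a' x + b_n} φ(t)/(1 − Φ(t)) dt and C_n(x) = (1/n) e^{−I_n(x)}, there exists a real number S_n(x) with 0 < S_n(x) < C_n(x)²/(2(1 − C_n(x))) such that Φⁿ(a' x + b_n) − Λ(x) = e^{−n S_n(x)} (Λ(I_n(x)) − Λ(x)) + Λ(x)(e^{−n S_n(x)} − 1). -/

import Mathlib

open Real

/-- The standard normal distribution function. -/
noncomputable def stdNormalCDF (x : ℝ) : ℝ :=
  (Real.sqrt (2 * Real.pi))⁻¹ * ∫ t in Set.Iic x, Real.exp (-t ^ 2 / 2)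

/-- The standard normal density. -/
noncomputable def stdNormalPDF (x : ℝ) : ℝ :=
  (Real.sqrt (2 * Real.pi))⁻¹ * Real.exp (-x ^ 2 / 2)

/-- The Gumbel distribution function. -/
noncomputable def gumbelCDF (x : ℝ) : ℝ := Real.exp (-Real.exp (-x))

/-!
The hazard integral telescopes: `∫_p^q φ/(1 − Φ) = log(1 − Φ p) − log(1 − Φ q)`, so
`1 − Φ(a' x + bₙ) = (1/n) e^{−Iₙ(x)} = Cₙ` exactly. Taking `Sₙ = −log(1 − Cₙ) − Cₙ`,
`Φⁿ(a' x + bₙ) = (1 − Cₙ)ⁿ = e^{−n Sₙ} e^{−n Cₙ} = e^{−n Sₙ} Λ(Iₙ)`, and the decomposition is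
algebra. The bounds on `Sₙ` come from `Sₙ = ∑_{k ≥ 2} Cₙᵏ/k`, compared termwise with
`∑_{k ≥ 2} Cₙᵏ/2`.
-/

open MeasureTheory Set

lemma integrable_exp_neg_sq_div_two : Integrable fun t : ℝ => exp (-t ^ 2 / 2) := by
  simpa [neg_div, div_eq_inv_mul, mul_comm] using
    integrable_exp_neg_mul_sq (b := 1 / 2) (by norm_num)

lemma integral_exp_neg_sq_div_two : ∫ t : ℝ, exp (-t ^ 2 / 2) = √(2 * π) := by
  simpa [neg_div, div_eq_inv_mul, mul_comm] using integral_gaussian (1 / 2)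

lemma setIntegral_exp_neg_sq_div_two_pos {s : Set ℝ} (hs : volume s ≠ 0) :
    0 < ∫ t in s, exp (-t ^ 2 / 2) :=
  have : NeZero (volume.restrict s) := ⟨by simpa using hs⟩
  integral_exp_pos integrable_exp_neg_sq_div_two.integrableOn

lemma hasDerivAt_integral_Iic {E : Type*} [NormedAddCommGroup E] [NormedSpace ℝ E]
    [CompleteSpace E] {f : ℝ → E} (hf : Integrable f) {x : ℝ} (hx : ContinuousAt f x) :
    HasDerivAt (fun u => ∫ t in Iic u, f t) (f x) x := by
  have hsplit : ∀ u, ∫ t in Iic u, f t = (∫ t in Iic 0, f t) + ∫ t in 0..u, f t := fun u => by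
    rw [← intervalIntegral.integral_Iic_sub_Iic hf.integrableOn hf.integrableOn, add_sub_cancel]
  rw [funext hsplit]
  exact (intervalIntegral.integral_hasDerivAt_right hf.intervalIntegrable
    hf.aestronglyMeasurable.stronglyMeasurableAtFilter hx).const_add _

lemma hasDerivAt_stdNormalCDF (x : ℝ) : HasDerivAt stdNormalCDF (stdNormalPDF x) x :=
  (hasDerivAt_integral_Iic integrable_exp_neg_sq_div_two (by fun_prop)).const_mul _

lemma continuous_stdNormalCDF : Continuous stdNormalCDF :=
  continuous_iff_continuousAt.2 fun x => (hasDerivAt_stdNormalCDF x).continuousAt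

lemma one_sub_stdNormalCDF (x : ℝ) :
    1 - stdNormalCDF x = (√(2 * π))⁻¹ * ∫ t in Ioi x, exp (-t ^ 2 / 2) := by
  have hsum := intervalIntegral.integral_Iic_add_Ioi (b := x)
    integrable_exp_neg_sq_div_two.integrableOn integrable_exp_neg_sq_div_two.integrableOn
  rw [integral_exp_neg_sq_div_two] at hsum
  have : (√(2 * π))⁻¹ * √(2 * π) = 1 := inv_mul_cancel₀ (by positivity)
  rw [stdNormalCDF, ← this, ← hsum]
  ring

lemma stdNormalCDF_pos (x : ℝ) : 0 < stdNormalCDF x :=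
  mul_pos (by positivity) (setIntegral_exp_neg_sq_div_two_pos (by simp))

lemma stdNormalCDF_lt_one (x : ℝ) : stdNormalCDF x < 1 := by
  have h : 0 < 1 - stdNormalCDF x := by
    rw [one_sub_stdNormalCDF]
    exact mul_pos (by positivity) (setIntegral_exp_neg_sq_div_two_pos (by simp))
  linarith

lemma integral_stdNormalPDF_div_one_sub_stdNormalCDF (p q : ℝ) :
    ∫ t in p..q, stdNormalPDF t / (1 - stdNormalCDF t)
      = log (1 - stdNormalCDF p) - log (1 - stdNormalCDF q) := by
  have hne : ∀ t, 1 - stdNormalCDF t ≠ 0 := fun t => (sub_pos.2 (stdNormalCDF_lt_one t)).ne'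
  have hderiv : ∀ t ∈ uIcc p q, HasDerivAt (fun u => -log (1 - stdNormalCDF u))
      (stdNormalPDF t / (1 - stdNormalCDF t)) t := fun t _ => by
    have := (((hasDerivAt_stdNormalCDF t).const_sub 1).log (hne t)).neg
    rwa [neg_div, neg_neg] at this
  have hcont : Continuous fun t => stdNormalPDF t / (1 - stdNormalCDF t) :=
    (by unfold stdNormalPDF; fun_prop : Continuous stdNormalPDF).div
      (continuous_const.sub continuous_stdNormalCDF) hne
  rw [intervalIntegral.integral_eq_sub_of_hasDerivAt hderiv (hcont.intervalIntegrable _ _)]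
  ring

lemma one_sub_stdNormalCDF_eq_mul_exp (p q : ℝ) :
    1 - stdNormalCDF q = (1 - stdNormalCDF p)
      * exp (-∫ t in p..q, stdNormalPDF t / (1 - stdNormalCDF t)) := by
  rw [integral_stdNormalPDF_div_one_sub_stdNormalCDF, neg_sub, exp_sub,
    exp_log (sub_pos.2 (stdNormalCDF_lt_one _)), exp_log (sub_pos.2 (stdNormalCDF_lt_one _))]
  field_simp [(sub_pos.2 (stdNormalCDF_lt_one p)).ne']

lemma neg_log_one_sub_sub_self_pos {c : ℝ} (h0 : c ≠ 0) (h1 : c < 1) : 0 < -log (1 - c) - c := by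
  linarith [log_lt_sub_one_of_pos (sub_pos.2 h1) (by simpa [sub_eq_self] using h0)]

lemma hasSum_pow_add_two_div_eq_neg_log_one_sub_sub_self {c : ℝ} (h : |c| < 1) :
    HasSum (fun k : ℕ => c ^ (k + 2) / (k + 2)) (-log (1 - c) - c) := by
  have := (hasSum_nat_add_iff' 1).2 (hasSum_pow_div_log_of_abs_lt_one h)
  simpa [add_assoc, one_add_one_eq_two] using this

lemma neg_log_one_sub_sub_self_lt {c : ℝ} (h0 : 0 < c) (h1 : c < 1) :
    -log (1 - c) - c < c ^ 2 / (2 * (1 - c)) := by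
  have hgeom : HasSum (fun k : ℕ => c ^ (k + 2) / 2) (c ^ 2 / (2 * (1 - c))) := by
    have h := (hasSum_geometric_of_lt_one h0.le h1).mul_left (c ^ 2 / 2)
    have hterm : (fun k : ℕ => c ^ 2 / 2 * c ^ k) = fun k => c ^ (k + 2) / 2 := by ext; ring
    rwa [hterm, ← div_eq_mul_inv, div_div] at h
  refine hasSum_lt (i := 1) (fun k => ?_) ?_
    (hasSum_pow_add_two_div_eq_neg_log_one_sub_sub_self (abs_lt.2 ⟨by linarith, h1⟩)) hgeom
  · exact div_le_div_of_nonneg_left (by positivity) two_pos (by linarith [k.cast_nonneg (α := ℝ)])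
  · exact div_lt_div_of_pos_left (by positivity) two_pos (by norm_num)

lemma one_sub_pow_eq_exp_mul_exp {c : ℝ} (h : c < 1) (n : ℕ) :
    (1 - c) ^ n = exp (-(n * (-log (1 - c) - c))) * exp (-(n * c)) := by
  rw [← exp_add, ← exp_log (sub_pos.2 h), ← exp_nat_mul, exp_log (sub_pos.2 h)]
  ring_nf

theorem difference_decomposition_general (n : ℕ) (a' : ℝ)
    (b : ℝ) (hb : stdNormalCDF b = 1 - 1 / (n : ℝ)) (x : ℝ)
    (I : ℝ) (hI : I = ∫ t in b..(a' * x + b), stdNormalPDF t / (1 - stdNormalCDF t))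
    (Cn : ℝ) (hCn : Cn = (1 / (n : ℝ)) * Real.exp (-I)) :
    ∃ S : ℝ, 0 < S ∧ S < Cn ^ 2 / (2 * (1 - Cn)) ∧
      stdNormalCDF (a' * x + b) ^ n - gumbelCDF x =
        Real.exp (-(n * S)) * (gumbelCDF I - gumbelCDF x)
          + gumbelCDF x * (Real.exp (-(n * S)) - 1) := by
  have hn : (n : ℝ) ≠ 0 := by
    rintro hn
    linarith [stdNormalCDF_lt_one b, show stdNormalCDF b = 1 by simp [hb, hn]]
  have hCn_eq : 1 - stdNormalCDF (a' * x + b) = Cn := by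
    rw [one_sub_stdNormalCDF_eq_mul_exp b, ← hI, hCn, hb, sub_sub_cancel]
  have hCn_pos : 0 < Cn := hCn_eq ▸ sub_pos.2 (stdNormalCDF_lt_one _)
  have hCn_lt : Cn < 1 := by linarith [stdNormalCDF_pos (a' * x + b)]
  have hpow : stdNormalCDF (a' * x + b) ^ n
      = exp (-(n * (-log (1 - Cn) - Cn))) * gumbelCDF I := by
    have hnCn : n * Cn = exp (-I) := by rw [hCn, ← mul_assoc, mul_one_div_cancel hn, one_mul]
    rw [show stdNormalCDF (a' * x + b) = 1 - Cn by linarith, one_sub_pow_eq_exp_mul_exp hCn_lt,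
      hnCn, gumbelCDF]
  refine ⟨-log (1 - Cn) - Cn, neg_log_one_sub_sub_self_pos hCn_pos.ne' hCn_lt,
    neg_log_one_sub_sub_self_lt hCn_pos hCn_lt, ?_⟩
  rw [hpow]
  ring

/-- Decomposition of `Φⁿ(a' x + bₙ) − Λ(x)`: with
`Iₙ(x) = ∫_{bₙ}^{a' x + bₙ} φ(t)/(1 − Φ(t)) dt` and `Cₙ(x) = (1/n) e^{−Iₙ(x)}`,
there is `Sₙ(x)` with `0 < Sₙ(x) < Cₙ(x)²/(2(1 − Cₙ(x)))` such that
`Φⁿ(a' x + bₙ) − Λ(x) = e^{−n Sₙ(x)}(Λ(Iₙ(x)) − Λ(x)) + Λ(x)(e^{−n Sₙ(x)} − 1)`. -/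
theorem difference_decomposition (n : ℕ) (hn : 2 ≤ n) (a' : ℝ) (ha' : 0 < a')
    (b : ℝ) (hb : stdNormalCDF b = 1 - 1 / (n : ℝ)) (x : ℝ)
    (I : ℝ) (hI : I = ∫ t in b..(a' * x + b), stdNormalPDF t / (1 - stdNormalCDF t))
    (Cn : ℝ) (hCn : Cn = (1 / (n : ℝ)) * Real.exp (-I)) :
    ∃ S : ℝ, 0 < S ∧ S < Cn ^ 2 / (2 * (1 - Cn)) ∧
      stdNormalCDF (a' * x + b) ^ n - gumbelCDF x =
        Real.exp (-(n * S)) * (gumbelCDF I - gumbelCDF x)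
          + gumbelCDF x * (Real.exp (-(n * S)) - 1) :=
  difference_decomposition_general n a' b hb x I hI Cn hCn
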